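/- Suppose A, B ∈ M^{2×2}(ℝ) with det(A) > 0, det(B) > 0, ‖A‖² ≤ Q·det(A) and ‖B‖² ≤ Q·det(B). Then |μ_A - μ_B| ≤ 32√Q · max(det A, det B)^{-1/2} · |S(A) - S(B)|, where S(M) = √(MᵀM) is the symmetric part of the polar decomposition. -/

import Mathlib

/-- Frobenius norm of a 2×2 real matrix. -/
noncomputable def frob (A : Matrix (Fin 2) (Fin 2) ℝ) : ℝ :=
  Real.sqrt (∑ i, ∑ j, (A i j) ^ 2)

/-- Operator norm of a 2×2 real matrix: sup of |Av| over Euclidean unit vectors v. -/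
noncomputable def opNorm (A : Matrix (Fin 2) (Fin 2) ℝ) : ℝ :=
  sSup {r | ∃ v : Fin 2 → ℝ, (v 0) ^ 2 + (v 1) ^ 2 = 1 ∧
    r = Real.sqrt ((A.mulVec v 0) ^ 2 + (A.mulVec v 1) ^ 2)}

/-- Conformal part of a 2×2 real matrix. -/
noncomputable def confPart (A : Matrix (Fin 2) (Fin 2) ℝ) : Matrix (Fin 2) (Fin 2) ℝ :=
  (1 / 2 : ℝ) • !![A 0 0 + A 1 1, -(A 1 0 - A 0 1); A 1 0 - A 0 1, A 0 0 + A 1 1]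

/-- Anticonformal part of a 2×2 real matrix. -/
noncomputable def antiPart (A : Matrix (Fin 2) (Fin 2) ℝ) : Matrix (Fin 2) (Fin 2) ℝ :=
  (1 / 2 : ℝ) • !![A 0 0 - A 1 1, A 1 0 + A 0 1; A 1 0 + A 0 1, -(A 0 0 - A 1 1)]

/-- The reflection matrix I = diag(1,-1). -/
noncomputable def I2 : Matrix (Fin 2) (Fin 2) ℝ := !![1, 0; 0, -1]

/-- The Beltrami coefficient of A: the (conformal) matrix μ_A with [A]_a·I = μ_A·[A]_c. -/
noncomputable def beltrami (A : Matrix (Fin 2) (Fin 2) ℝ) : Matrix (Fin 2) (Fin 2) ℝ :=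
  antiPart A * I2 * (confPart A)⁻¹

/-- S(A) = √(AᵀA): the symmetric part of the polar decomposition, i.e. the
positive-semidefinite square root of AᴴA. -/
noncomputable def polarS (A : Matrix (Fin 2) (Fin 2) ℝ) : Matrix (Fin 2) (Fin 2) ℝ :=
  ((Matrix.posSemidef_conjTranspose_mul_self A).1.eigenvectorUnitary : Matrix (Fin 2) (Fin 2) ℝ) *
    Matrix.diagonal ((RCLike.ofReal : ℝ → ℝ) ∘ (√·) ∘ (Matrix.posSemidef_conjTranspose_mul_self A).1.eigenvalues) *
    (star (Matrix.posSemidef_conjTranspose_mul_self A).1.eigenvectorUnitary : Matrix (Fin 2) (Fin 2) ℝ)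

/-! ### Auxiliary machinery -/

/-- Complex coefficient of the conformal part. -/
noncomputable def cc (M : Matrix (Fin 2) (Fin 2) ℝ) : ℂ :=
  ⟨(M 0 0 + M 1 1) / 2, (M 1 0 - M 0 1) / 2⟩

/-- Complex coefficient of the anticonformal part. -/
noncomputable def ca (M : Matrix (Fin 2) (Fin 2) ℝ) : ℂ :=
  ⟨(M 0 0 - M 1 1) / 2, (M 1 0 + M 0 1) / 2⟩

@[simp] lemma cc_re (M : Matrix (Fin 2) (Fin 2) ℝ) : (cc M).re = (M 0 0 + M 1 1) / 2 := rfl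
@[simp] lemma cc_im (M : Matrix (Fin 2) (Fin 2) ℝ) : (cc M).im = (M 1 0 - M 0 1) / 2 := rfl
@[simp] lemma ca_re (M : Matrix (Fin 2) (Fin 2) ℝ) : (ca M).re = (M 0 0 - M 1 1) / 2 := rfl
@[simp] lemma ca_im (M : Matrix (Fin 2) (Fin 2) ℝ) : (ca M).im = (M 1 0 + M 0 1) / 2 := rfl

lemma cc_sub (M N : Matrix (Fin 2) (Fin 2) ℝ) : cc (M - N) = cc M - cc N := by
  apply Complex.ext <;> simp [Matrix.sub_apply] <;> ring

lemma ca_sub (M N : Matrix (Fin 2) (Fin 2) ℝ) : ca (M - N) = ca M - ca N := by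
  apply Complex.ext <;> simp [Matrix.sub_apply] <;> ring

lemma normSq_cc (M : Matrix (Fin 2) (Fin 2) ℝ) :
    Complex.normSq (cc M) = ((M 0 0 + M 1 1) / 2) ^ 2 + ((M 1 0 - M 0 1) / 2) ^ 2 := by
  rw [Complex.normSq_apply, cc_re, cc_im]; ring

lemma normSq_ca (M : Matrix (Fin 2) (Fin 2) ℝ) :
    Complex.normSq (ca M) = ((M 0 0 - M 1 1) / 2) ^ 2 + ((M 1 0 + M 0 1) / 2) ^ 2 := by
  rw [Complex.normSq_apply, ca_re, ca_im]; ring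

lemma det_eq_normSq (M : Matrix (Fin 2) (Fin 2) ℝ) :
    M.det = Complex.normSq (cc M) - Complex.normSq (ca M) := by
  rw [Matrix.det_fin_two, normSq_cc, normSq_ca]; ring

lemma cc_ne_zero (M : Matrix (Fin 2) (Fin 2) ℝ) (h : 0 < M.det) : cc M ≠ 0 := by
  intro h0
  have hd := det_eq_normSq M
  rw [h0] at hd
  simp at hd
  nlinarith [Complex.normSq_nonneg (ca M)]

lemma abs_cc_add_abs_ca_le_frob (M : Matrix (Fin 2) (Fin 2) ℝ) :
    ‖cc M‖ + ‖ca M‖ ≤ frob M := by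
  have hsum : 2 * (Complex.normSq (cc M) + Complex.normSq (ca M)) = ∑ i, ∑ j, (M i j) ^ 2 := by
    rw [normSq_cc, normSq_ca]
    simp [Fin.sum_univ_two]
    ring
  have habs2 : (‖cc M‖ + ‖ca M‖) ^ 2 ≤ ∑ i, ∑ j, (M i j) ^ 2 := by
    rw [← hsum]
    nlinarith [Complex.sq_norm (cc M), Complex.sq_norm (ca M),
      sq_nonneg (‖cc M‖ - ‖ca M‖)]
  have h := Real.sqrt_le_sqrt habs2
  rwa [Real.sqrt_sq (by positivity)] at h

lemma frob_conf (z : ℂ) : frob !![z.re, -z.im; z.im, z.re] = Real.sqrt 2 * ‖z‖ := by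
  have h : (∑ i, ∑ j, ((!![z.re, -z.im; z.im, z.re] : Matrix (Fin 2) (Fin 2) ℝ) i j) ^ 2)
      = 2 * (z.re * z.re + z.im * z.im) := by
    simp [Fin.sum_univ_two]
    ring
  rw [frob, h, Complex.norm_def, Complex.normSq_apply,
    ← Real.sqrt_mul (by norm_num : (0:ℝ) ≤ 2)]

lemma confPart_inv (M : Matrix (Fin 2) (Fin 2) ℝ)
    (h : ((M 0 0 + M 1 1) / 2) ^ 2 + ((M 1 0 - M 0 1) / 2) ^ 2 ≠ 0) :
    (confPart M)⁻¹ = (((M 0 0 + M 1 1) / 2) ^ 2 + ((M 1 0 - M 0 1) / 2) ^ 2)⁻¹ •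
      !![(M 0 0 + M 1 1) / 2, (M 1 0 - M 0 1) / 2;
         -((M 1 0 - M 0 1) / 2), (M 0 0 + M 1 1) / 2] := by
  apply Matrix.inv_eq_right_inv
  have key : confPart M * !![(M 0 0 + M 1 1) / 2, (M 1 0 - M 0 1) / 2;
         -((M 1 0 - M 0 1) / 2), (M 0 0 + M 1 1) / 2]
      = (((M 0 0 + M 1 1) / 2) ^ 2 + ((M 1 0 - M 0 1) / 2) ^ 2) •
        (1 : Matrix (Fin 2) (Fin 2) ℝ) := by
    ext i j
    fin_cases i <;> fin_cases j <;>
      · simp [confPart, Matrix.mul_apply, Fin.sum_univ_two, Matrix.one_apply]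
        ring
  rw [Matrix.mul_smul, key, smul_smul, inv_mul_cancel₀ h, one_smul]

set_option maxHeartbeats 2000000 in
lemma beltrami_eq (M : Matrix (Fin 2) (Fin 2) ℝ) (h : cc M ≠ 0) :
    beltrami M = !![(ca M / cc M).re, -(ca M / cc M).im;
                    (ca M / cc M).im, (ca M / cc M).re] := by
  have hn0 : ((M 0 0 + M 1 1) / 2) ^ 2 + ((M 1 0 - M 0 1) / 2) ^ 2 ≠ 0 := by
    rw [← normSq_cc]
    simpa [Complex.normSq_eq_zero] using h
  rw [beltrami, confPart_inv M hn0, Matrix.mul_smul]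
  ext i j
  fin_cases i <;> fin_cases j <;>
    · simp only [Matrix.smul_apply, Matrix.mul_apply, Fin.sum_univ_two, antiPart, I2,
        Matrix.cons_val', Matrix.cons_val_zero, Matrix.cons_val_one, Matrix.head_cons,
        Matrix.empty_val', Matrix.cons_val_fin_one, Matrix.head_fin_const, Matrix.of_apply,
        Fin.isValue, smul_eq_mul, Complex.div_re, Complex.div_im, ca_re, ca_im, cc_re, cc_im,
        normSq_cc, Fin.mk_one, Fin.mk_zero, neg_mul, one_mul, mul_one,
        mul_neg, neg_neg, mul_zero, zero_mul, add_zero, zero_add]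
      field_simp
      all_goals ring

lemma key_div_aux (β1 β2 : ℂ) (t1 t2 : ℝ) (h1 : 0 < t1) (h2 : 0 < t2) (h12 : t1 ≤ t2)
    (hb1 : ‖β1‖ ≤ t1) :
    ‖β1 / (t1 : ℂ) - β2 / (t2 : ℂ)‖ ≤
      (|t1 - t2| + ‖β1 - β2‖) / t2 := by
  have ht1 : (t1 : ℂ) ≠ 0 := by exact_mod_cast h1.ne'
  have ht2 : (t2 : ℂ) ≠ 0 := by exact_mod_cast h2.ne'
  have hrw : β1 / (t1 : ℂ) - β2 / (t2 : ℂ)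
      = (β1 * (((t2 - t1 : ℝ)) : ℂ) + (t1 : ℂ) * (β1 - β2)) / ((t1 : ℂ) * (t2 : ℂ)) := by
    field_simp
    push_cast
    ring
  rw [hrw, norm_div, norm_mul, Complex.norm_real, Complex.norm_real, Real.norm_eq_abs,
    Real.norm_eq_abs, abs_of_pos h1, abs_of_pos h2]
  rw [div_le_div_iff₀ (by positivity) h2]
  have tri : ‖β1 * (((t2 - t1 : ℝ)) : ℂ) + (t1 : ℂ) * (β1 - β2)‖
      ≤ t1 * (|t1 - t2| + ‖β1 - β2‖) := by
    calc ‖β1 * (((t2 - t1 : ℝ)) : ℂ) + (t1 : ℂ) * (β1 - β2)‖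
        ≤ ‖β1 * (((t2 - t1 : ℝ)) : ℂ)‖ + ‖(t1 : ℂ) * (β1 - β2)‖ :=
          norm_add_le _ _
      _ = ‖β1‖ * |t2 - t1| + t1 * ‖β1 - β2‖ := by
          rw [norm_mul, norm_mul, Complex.norm_real, Complex.norm_real, Real.norm_eq_abs,
              Real.norm_eq_abs, abs_of_pos h1]
      _ ≤ t1 * |t2 - t1| + t1 * ‖β1 - β2‖ := by
          have := abs_nonneg (t2 - t1)
          nlinarith
      _ = t1 * (|t1 - t2| + ‖β1 - β2‖) := by rw [abs_sub_comm]; ring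
  nlinarith [tri, norm_nonneg (β1 * (((t2 - t1 : ℝ)) : ℂ) + (t1 : ℂ) * (β1 - β2)),
    abs_nonneg (t1 - t2), norm_nonneg (β1 - β2)]

lemma key_div (β1 β2 : ℂ) (t1 t2 : ℝ) (h1 : 0 < t1) (h2 : 0 < t2)
    (hb1 : ‖β1‖ ≤ t1) (hb2 : ‖β2‖ ≤ t2) :
    ‖β1 / (t1 : ℂ) - β2 / (t2 : ℂ)‖ ≤
      (|t1 - t2| + ‖β1 - β2‖) / max t1 t2 := by
  rcases le_total t1 t2 with h | h
  · rw [max_eq_right h]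
    exact key_div_aux β1 β2 t1 t2 h1 h2 h hb1
  · rw [max_eq_left h]
    have h3 := key_div_aux β2 β1 t2 t1 h2 h1 h hb2
    rw [norm_sub_rev (β1 / (t1 : ℂ)) (β2 / (t2 : ℂ)), norm_sub_rev β1 β2,
      abs_sub_comm t1 t2]
    exact h3

set_option maxHeartbeats 1000000 in
lemma polar_props (A : Matrix (Fin 2) (Fin 2) ℝ) (hA : 0 < A.det) :
    ∃ t : ℝ, cc (polarS A) = (t : ℂ) ∧ 0 < t ∧ ‖ca (polarS A)‖ ≤ t ∧
      Real.sqrt A.det ≤ t ∧ ca A / cc A = ca (polarS A) / (t : ℂ) := by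
  set S := polarS A with hSdef
  have hsd : S.PosSemidef := by
    have h := (Matrix.posSemidef_diagonal_iff.mpr (fun i => Real.sqrt_nonneg
      ((Matrix.posSemidef_conjTranspose_mul_self A).1.eigenvalues i))).mul_mul_conjTranspose_same
      ((Matrix.posSemidef_conjTranspose_mul_self A).1.eigenvectorUnitary : Matrix (Fin 2) (Fin 2) ℝ)
    simpa [hSdef, polarS, Matrix.star_eq_conjTranspose, Function.comp_def] using h
  have hsq : S * S = A.conjTranspose * A := by
    have H := Matrix.posSemidef_conjTranspose_mul_self A
    have hU := Unitary.star_mul_self_of_mem H.1.eigenvectorUnitary.2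
    have hD : Matrix.diagonal ((RCLike.ofReal : ℝ → ℝ) ∘ (√·) ∘ H.1.eigenvalues) *
        Matrix.diagonal ((RCLike.ofReal : ℝ → ℝ) ∘ (√·) ∘ H.1.eigenvalues)
        = Matrix.diagonal ((RCLike.ofReal : ℝ → ℝ) ∘ H.1.eigenvalues) := by
      rw [Matrix.diagonal_mul_diagonal]
      congr 1; funext i
      simp
      exact Real.mul_self_sqrt (H.eigenvalues_nonneg i)
    have hspec := H.1.spectral_theorem
    rw [Unitary.conjStarAlgAut_apply] at hspec
    rw [hSdef, polarS]
    calc _ = (H.1.eigenvectorUnitary : Matrix (Fin 2) (Fin 2) ℝ) *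
          Matrix.diagonal ((RCLike.ofReal : ℝ → ℝ) ∘ (√·) ∘ H.1.eigenvalues) *
          (star (H.1.eigenvectorUnitary : Matrix (Fin 2) (Fin 2) ℝ) *
            (H.1.eigenvectorUnitary : Matrix (Fin 2) (Fin 2) ℝ)) *
          Matrix.diagonal ((RCLike.ofReal : ℝ → ℝ) ∘ (√·) ∘ H.1.eigenvalues) *
          star (H.1.eigenvectorUnitary : Matrix (Fin 2) (Fin 2) ℝ) := by
            simp only [Matrix.mul_assoc, Unitary.coe_star]
      _ = (H.1.eigenvectorUnitary : Matrix (Fin 2) (Fin 2) ℝ) *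
          (Matrix.diagonal ((RCLike.ofReal : ℝ → ℝ) ∘ (√·) ∘ H.1.eigenvalues) *
          Matrix.diagonal ((RCLike.ofReal : ℝ → ℝ) ∘ (√·) ∘ H.1.eigenvalues)) *
          star (H.1.eigenvectorUnitary : Matrix (Fin 2) (Fin 2) ℝ) := by
            rw [hU, Matrix.mul_one]; simp only [Matrix.mul_assoc]
      _ = _ := by rw [hD]; exact hspec.symm
  have hsym : S 1 0 = S 0 1 := by
    have h := hsd.1.apply 0 1
    simpa using h
  have e00 : S 0 0 * S 0 0 + S 0 1 * S 0 1 = A 0 0 * A 0 0 + A 1 0 * A 1 0 := by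
    have h := Matrix.ext_iff.2 hsq 0 0
    simp [Matrix.mul_apply, Fin.sum_univ_two, Matrix.conjTranspose_apply, hsym] at h
    linear_combination h
  have e01 : S 0 0 * S 0 1 + S 0 1 * S 1 1 = A 0 0 * A 0 1 + A 1 0 * A 1 1 := by
    have h := Matrix.ext_iff.2 hsq 0 1
    simp [Matrix.mul_apply, Fin.sum_univ_two, Matrix.conjTranspose_apply, hsym] at h
    linear_combination h
  have e11 : S 0 1 * S 0 1 + S 1 1 * S 1 1 = A 0 1 * A 0 1 + A 1 1 * A 1 1 := by
    have h := Matrix.ext_iff.2 hsq 1 1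
    simp [Matrix.mul_apply, Fin.sum_univ_two, Matrix.conjTranspose_apply, hsym] at h
    linear_combination h
  have hform : ∀ x y : ℝ,
      0 ≤ x * (S 0 0 * x + S 0 1 * y) + y * (S 0 1 * x + S 1 1 * y) := by
    intro x y
    have h := hsd.dotProduct_mulVec_nonneg ![x, y]
    simp [dotProduct, Matrix.mulVec, Fin.sum_univ_two, hsym] at h
    nlinarith [h]
  have hp : 0 ≤ S 0 0 := by have := hform 1 0; nlinarith
  have hq : 0 ≤ S 1 1 := by have := hform 0 1; nlinarith
  have hdetS_nonneg : 0 ≤ S 0 0 * S 1 1 - S 0 1 * S 0 1 := by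
    rcases lt_or_ge 0 (S 0 0) with hp0 | hp0
    · nlinarith [hform (S 0 1) (-(S 0 0))]
    · have hp00 : S 0 0 = 0 := le_antisymm hp0 hp
      have hr : S 0 1 = 0 := by
        by_contra hr
        have h := hform (-(S 1 1 + 1) / (2 * S 0 1)) 1
        rw [hp00] at h
        have key : (-(S 1 1 + 1) / (2 * S 0 1)) * S 0 1 = -(S 1 1 + 1) / 2 := by
          field_simp
        nlinarith [h, key]
      rw [hp00, hr]; norm_num
  have hdet2 : S.det * S.det = A.det * A.det := by
    have h := congrArg Matrix.det hsq
    rwa [Matrix.det_mul, Matrix.det_mul, Matrix.det_conjTranspose, star_trivial] at h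
  have hdetSval : S.det = S 0 0 * S 1 1 - S 0 1 * S 0 1 := by
    rw [Matrix.det_fin_two, hsym]
  have hdetS_eq : S.det = A.det := by
    have h0 : (S.det - A.det) * (S.det + A.det) = 0 := by linear_combination hdet2
    rcases mul_eq_zero.mp h0 with h | h
    · linarith
    · rw [hdetSval] at h; nlinarith
  have hccS : cc S = (((S 0 0 + S 1 1) / 2 : ℝ) : ℂ) := by
    apply Complex.ext <;> simp [hsym]
  have hxy : Complex.normSq (cc A) - Complex.normSq (ca A) = A.det :=
    (det_eq_normSq A).symm
  have hnsS : Complex.normSq (ca S) = ((S 0 0 - S 1 1) / 2) ^ 2 + S 0 1 ^ 2 := by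
    rw [normSq_ca, hsym]; ring
  have hsum : ((S 0 0 + S 1 1) / 2) * ((S 0 0 + S 1 1) / 2) + Complex.normSq (ca S)
      = Complex.normSq (cc A) + Complex.normSq (ca A) := by
    rw [hnsS, normSq_cc, normSq_ca]
    linear_combination e00 / 2 + e11 / 2
  have hdiff : ((S 0 0 + S 1 1) / 2) * ((S 0 0 + S 1 1) / 2) - Complex.normSq (ca S)
      = A.det := by
    rw [hnsS]
    have h1 : S 0 0 * S 1 1 - S 0 1 * S 0 1 = A.det := hdetSval ▸ hdetS_eq
    linear_combination h1
  have ht2 : ((S 0 0 + S 1 1) / 2) * ((S 0 0 + S 1 1) / 2) = Complex.normSq (cc A) := by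
    linarith
  have hnS_eq : Complex.normSq (ca S) = Complex.normSq (ca A) := by linarith
  have hx_pos : 0 < Complex.normSq (cc A) := by
    nlinarith [Complex.normSq_nonneg (ca A)]
  have ht_pos : 0 < (S 0 0 + S 1 1) / 2 := by nlinarith
  have habsle : ‖ca S‖ ≤ (S 0 0 + S 1 1) / 2 := by
    have h2 : ‖ca S‖ ^ 2 ≤ ((S 0 0 + S 1 1) / 2) ^ 2 := by
      rw [Complex.sq_norm]
      nlinarith [Complex.normSq_nonneg (ca A)]
    nlinarith [norm_nonneg (ca S)]
  have hsqrtle : Real.sqrt A.det ≤ (S 0 0 + S 1 1) / 2 := by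
    have h1 : A.det ≤ ((S 0 0 + S 1 1) / 2) ^ 2 := by
      nlinarith [Complex.normSq_nonneg (ca S)]
    calc Real.sqrt A.det ≤ Real.sqrt (((S 0 0 + S 1 1) / 2) ^ 2) := Real.sqrt_le_sqrt h1
      _ = (S 0 0 + S 1 1) / 2 := Real.sqrt_sq (le_of_lt ht_pos)
  have hmu : ca A / cc A = ca S / ((((S 0 0 + S 1 1) / 2 : ℝ)) : ℂ) := by
    have hN2 : (starRingEnd ℂ) (cc A) * ca A
        = ((((S 0 0 + S 1 1) / 2 : ℝ)) : ℂ) * ca S := by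
      apply Complex.ext
      · simp [Complex.mul_re, hsym]
        linear_combination (e11 - e00) / 4
      · simp [Complex.mul_im, hsym]
        linear_combination -e01 / 2
    have hccA_ne : cc A ≠ 0 := cc_ne_zero A hA
    have ht0 : ((((S 0 0 + S 1 1) / 2 : ℝ)) : ℂ) ≠ 0 := by
      exact_mod_cast ht_pos.ne'
    rw [div_eq_div_iff hccA_ne ht0]
    apply mul_left_cancel₀ ht0
    calc ((((S 0 0 + S 1 1) / 2 : ℝ)) : ℂ) * (ca A * ((((S 0 0 + S 1 1) / 2 : ℝ)) : ℂ))
        = ((((S 0 0 + S 1 1) / 2) * ((S 0 0 + S 1 1) / 2) : ℝ) : ℂ) * ca A := by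
          push_cast; ring
      _ = ((Complex.normSq (cc A) : ℝ) : ℂ) * ca A := by rw [ht2]
      _ = (cc A * (starRingEnd ℂ) (cc A)) * ca A := by rw [Complex.mul_conj]
      _ = cc A * ((starRingEnd ℂ) (cc A) * ca A) := by ring
      _ = cc A * (((((S 0 0 + S 1 1) / 2 : ℝ)) : ℂ) * ca S) := by rw [hN2]
      _ = ((((S 0 0 + S 1 1) / 2 : ℝ)) : ℂ) * (ca S * cc A) := by ring
  exact ⟨(S 0 0 + S 1 1) / 2, hccS, ht_pos, habsle, hsqrtle, hmu⟩

set_option maxHeartbeats 2000000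

/-- Bound on the difference of Beltrami coefficients of two Q-quasiconformal matrices
by the difference of symmetric parts. -/
theorem stmt7 (A B : Matrix (Fin 2) (Fin 2) ℝ) (Q : ℝ) (hQ : 1 ≤ Q)
    (hA : 0 < A.det) (hB : 0 < B.det)
    (hAn : opNorm A ^ 2 ≤ Q * A.det) (hBn : opNorm B ^ 2 ≤ Q * B.det) :
    frob (beltrami A - beltrami B) ≤
      32 * Real.sqrt Q / Real.sqrt (max A.det B.det) * frob (polarS A - polarS B) := by
  obtain ⟨t1, hcc1, ht1, hb1, hs1, hm1⟩ := polar_props A hA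
  obtain ⟨t2, hcc2, ht2, hb2, hs2, hm2⟩ := polar_props B hB
  have hccA_ne : cc A ≠ 0 := cc_ne_zero A hA
  have hccB_ne : cc B ≠ 0 := cc_ne_zero B hB
  set m : ℂ := ca A / cc A - ca B / cc B with hm
  have hfrobL : frob (beltrami A - beltrami B) = Real.sqrt 2 * ‖m‖ := by
    rw [beltrami_eq A hccA_ne, beltrami_eq B hccB_ne]
    have hsubm : (!![(ca A / cc A).re, -(ca A / cc A).im;
                    (ca A / cc A).im, (ca A / cc A).re]
        - !![(ca B / cc B).re, -(ca B / cc B).im;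
             (ca B / cc B).im, (ca B / cc B).re]) = !![m.re, -m.im; m.im, m.re] := by
      ext i j
      fin_cases i <;> fin_cases j <;> simp [hm, Matrix.sub_apply] <;> ring
    rw [hsubm, frob_conf]
  have hkey : ‖m‖ ≤ (|t1 - t2| + ‖ca (polarS A) - ca (polarS B)‖)
      / max t1 t2 := by
    rw [hm, hm1, hm2]
    exact key_div _ _ _ _ ht1 ht2 hb1 hb2
  have hDle : |t1 - t2| + ‖ca (polarS A) - ca (polarS B)‖
      ≤ frob (polarS A - polarS B) := by
    have h1 := abs_cc_add_abs_ca_le_frob (polarS A - polarS B)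
    rw [cc_sub, ca_sub, hcc1, hcc2, ← Complex.ofReal_sub, Complex.norm_real, Real.norm_eq_abs] at h1
    exact h1
  have hmax : Real.sqrt (max A.det B.det) ≤ max t1 t2 := by
    rcases max_cases A.det B.det with ⟨h, _⟩ | ⟨h, _⟩ <;> rw [h]
    · exact le_trans hs1 (le_max_left _ _)
    · exact le_trans hs2 (le_max_right _ _)
  have hsd_pos : 0 < Real.sqrt (max A.det B.det) :=
    Real.sqrt_pos.mpr (lt_max_of_lt_left hA)
  have hmax_pos : 0 < max t1 t2 := lt_of_lt_of_le hsd_pos hmax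
  have hF : (0:ℝ) ≤ frob (polarS A - polarS B) := Real.sqrt_nonneg _
  have habs : ‖m‖ ≤ frob (polarS A - polarS B) / Real.sqrt (max A.det B.det) := by
    calc ‖m‖
        ≤ (|t1 - t2| + ‖ca (polarS A) - ca (polarS B)‖) / max t1 t2 := hkey
      _ ≤ frob (polarS A - polarS B) / max t1 t2 := by gcongr
      _ ≤ frob (polarS A - polarS B) / Real.sqrt (max A.det B.det) := by gcongr
  have hQ1 : (1:ℝ) ≤ Real.sqrt Q := by
    rw [show (1:ℝ) = Real.sqrt 1 by simp]
    exact Real.sqrt_le_sqrt hQ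
  have h2le : Real.sqrt 2 ≤ 32 * Real.sqrt Q := by
    have h24 : Real.sqrt 2 ≤ 2 := by
      nlinarith [Real.sq_sqrt (by norm_num : (0:ℝ) ≤ 2), Real.sqrt_nonneg 2]
    linarith
  rw [hfrobL]
  calc Real.sqrt 2 * ‖m‖
      ≤ Real.sqrt 2 * (frob (polarS A - polarS B) / Real.sqrt (max A.det B.det)) :=
        mul_le_mul_of_nonneg_left habs (Real.sqrt_nonneg 2)
    _ = (Real.sqrt 2 * frob (polarS A - polarS B)) / Real.sqrt (max A.det B.det) := by
        rw [mul_div_assoc]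
    _ ≤ (32 * Real.sqrt Q * frob (polarS A - polarS B)) / Real.sqrt (max A.det B.det) := by
        apply div_le_div_of_nonneg_right ?_ hsd_pos.le
        exact mul_le_mul_of_nonneg_right h2le hF
    _ = 32 * Real.sqrt Q / Real.sqrt (max A.det B.det) * frob (polarS A - polarS B) := by
        ring
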